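/- arXiv:2006.05400 — 3 statements merged into one kernel-verified Lean document; each statement's English description precedes it below -/
import Mathlib

section
/- Let ℓ > 0 and let t : [0, ℓ/2] → R be continuously differentiable. Then ∫₀^{ℓ/2} √(s² + t(s)²)·√(1 + t'(s)²) ds ≥ ∫₀^{ℓ/2} s ds = ℓ²/8, with equality if and only if t ≡ 0 on [0, ℓ/2]. -/
open MeasureTheory intervalIntegral Set

theorem stmt_8 (ℓ : ℝ) (hℓ : 0 < ℓ) (t : ℝ → ℝ) (ht : ContDiff ℝ 1 t) :
    ((∫ s in (0 : ℝ)..(ℓ / 2), s) = ℓ ^ 2 / 8) ∧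
    (∫ s in (0 : ℝ)..(ℓ / 2),
        Real.sqrt (s ^ 2 + t s ^ 2) * Real.sqrt (1 + deriv t s ^ 2))
      ≥ ℓ ^ 2 / 8 ∧
    ((∫ s in (0 : ℝ)..(ℓ / 2),
        Real.sqrt (s ^ 2 + t s ^ 2) * Real.sqrt (1 + deriv t s ^ 2))
      = ℓ ^ 2 / 8 ↔ ∀ s ∈ Set.Icc (0 : ℝ) (ℓ / 2), t s = 0) := by
  set a := ℓ / 2 with ha
  have ha0 : 0 < a := by positivity
  set f : ℝ → ℝ := fun s => Real.sqrt (s ^ 2 + t s ^ 2) * Real.sqrt (1 + deriv t s ^ 2)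
    with hfdef
  have hdc : Continuous (deriv t) := ht.continuous_deriv le_rfl
  have hfc : Continuous f := by
    apply Continuous.mul
    · exact (Real.continuous_sqrt).comp ((continuous_pow 2).add (ht.continuous.pow 2))
    · exact (Real.continuous_sqrt).comp (continuous_const.add (hdc.pow 2))
  have hB : ∀ s, 1 ≤ Real.sqrt (1 + deriv t s ^ 2) := by
    intro s
    have := Real.sqrt_le_sqrt (show (1:ℝ) ≤ 1 + deriv t s ^ 2 by nlinarith [sq_nonneg (deriv t s)])
    simpa using this
  have hpt : ∀ s, s ≤ f s := by
    intro s
    have h1 : |s| ≤ Real.sqrt (s ^ 2 + t s ^ 2) := by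
      rw [← Real.sqrt_sq_eq_abs]
      exact Real.sqrt_le_sqrt (by nlinarith [sq_nonneg (t s)])
    calc s ≤ |s| := le_abs_self s
    _ ≤ Real.sqrt (s ^ 2 + t s ^ 2) := h1
    _ ≤ f s := le_mul_of_one_le_right (Real.sqrt_nonneg _) (hB s)
  have hlt : ∀ c, t c ≠ 0 → c < f c := by
    intro c hc
    have h1 : |c| < Real.sqrt (c ^ 2 + t c ^ 2) := by
      rw [← Real.sqrt_sq_eq_abs]
      refine Real.sqrt_lt_sqrt (sq_nonneg c) ?_
      have ht2 : 0 < t c ^ 2 := by positivity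
      linarith
    calc c ≤ |c| := le_abs_self c
    _ < Real.sqrt (c ^ 2 + t c ^ 2) := h1
    _ ≤ f c := le_mul_of_one_le_right (Real.sqrt_nonneg _) (hB c)
  have hid : (∫ s in (0:ℝ)..a, s) = ℓ ^ 2 / 8 := by
    rw [integral_id]; rw [ha]; ring
  refine ⟨hid, ?_, ?_⟩
  · rw [ge_iff_le, ← hid]
    exact integral_mono_on ha0.le intervalIntegrable_id
      (hfc.intervalIntegrable _ _) (fun s _ => hpt s)
  · constructor
    · intro heq
      by_contra hcon
      push_neg at hcon
      obtain ⟨c, hc, hc0⟩ := hcon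
      have : (∫ s in (0:ℝ)..a, s) < ∫ s in (0:ℝ)..a, f s :=
        integral_lt_integral_of_continuousOn_of_le_of_exists_lt ha0
          continuousOn_id hfc.continuousOn (fun x _ => hpt x)
          ⟨c, hc, hlt c hc0⟩
      rw [hid, heq] at this
      exact lt_irrefl _ this
    · intro h0
      rw [← hid]
      apply intervalIntegral.integral_congr_ae
      have hne : ∀ᵐ x : ℝ, x ≠ a := by
        rw [ae_iff]
        simpa using (by simp [Real.volume_singleton] :
          MeasureTheory.volume ({a} : Set ℝ) = 0)
      filter_upwards [hne] with x hx hmem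
      rw [Set.uIoc_of_le ha0.le] at hmem
      have hxo : x ∈ Set.Ioo (0:ℝ) a := ⟨hmem.1, lt_of_le_of_ne hmem.2 hx⟩
      have htx : t x = 0 := h0 x (Set.Ioo_subset_Icc_self hxo)
      have hder : deriv t x = 0 := by
        have hev : t =ᶠ[nhds x] (fun _ => (0:ℝ)) :=
          Filter.eventuallyEq_of_mem (Ioo_mem_nhds hxo.1 hxo.2)
            (fun y hy => h0 y (Set.Ioo_subset_Icc_self hy))
        rw [hev.deriv_eq, deriv_const]
      show f x = x
      rw [hfdef]
      simp only [htx, hder]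
      norm_num
      rw [Real.sqrt_sq hxo.1.le]
end

section
/- Let ℓ > 0 and t : [0, ℓ] → R be C¹ with t(0) = t(ℓ) = 0. Define the SAL loss of the curve u(s) = (s, t(s)) as L(t) = ∫₀^ℓ h(s, t(s))·√(1 + t'(s)²) ds, where h(s,τ) = min(√(s² + τ²), √((s−ℓ)² + τ²)). Then L(t) ≥ ℓ²/4, with equality if and only if t ≡ 0. -/
open Set intervalIntegral

theorem stmt_13 (ℓ : ℝ) (hℓ : 0 < ℓ) (t : ℝ → ℝ) (ht : ContDiff ℝ 1 t)
    (h0 : t 0 = 0) (hl : t ℓ = 0) :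
    (∫ s in (0 : ℝ)..ℓ,
        min (Real.sqrt (s ^ 2 + t s ^ 2)) (Real.sqrt ((s - ℓ) ^ 2 + t s ^ 2)) *
          Real.sqrt (1 + deriv t s ^ 2))
      ≥ ℓ ^ 2 / 4 ∧
    ((∫ s in (0 : ℝ)..ℓ,
        min (Real.sqrt (s ^ 2 + t s ^ 2)) (Real.sqrt ((s - ℓ) ^ 2 + t s ^ 2)) *
          Real.sqrt (1 + deriv t s ^ 2))
      = ℓ ^ 2 / 4 ↔ ∀ s ∈ Set.Icc (0 : ℝ) ℓ, t s = 0) := by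
  set F : ℝ → ℝ := fun s =>
    min (Real.sqrt (s ^ 2 + t s ^ 2)) (Real.sqrt ((s - ℓ) ^ 2 + t s ^ 2)) *
      Real.sqrt (1 + deriv t s ^ 2) with hF
  set G : ℝ → ℝ := fun s => min s (ℓ - s) with hGdef
  have ht' : Continuous (deriv t) := (ht.iterate_deriv' 0 1).continuous
  have htc : Continuous t := ht.continuous
  have hFc : Continuous F := by
    apply Continuous.mul
    · exact Continuous.min
        (Real.continuous_sqrt.comp (by fun_prop))
        (Real.continuous_sqrt.comp (by fun_prop))
    · exact Real.continuous_sqrt.comp (by fun_prop)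
  have hGc : Continuous G := by fun_prop
  -- pointwise bound
  have hmin_le : ∀ s ∈ Icc (0:ℝ) ℓ, G s ≤
      min (Real.sqrt (s ^ 2 + t s ^ 2)) (Real.sqrt ((s - ℓ) ^ 2 + t s ^ 2)) := by
    intro s hs
    refine le_min ?_ ?_
    · refine min_le_of_left_le ?_
      calc s ≤ |s| := le_abs_self s
        _ = Real.sqrt (s ^ 2) := (Real.sqrt_sq_eq_abs s).symm
        _ ≤ Real.sqrt (s ^ 2 + t s ^ 2) := Real.sqrt_le_sqrt (by nlinarith [sq_nonneg (t s)])
    · refine min_le_of_right_le ?_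
      calc ℓ - s ≤ |s - ℓ| := by rw [abs_sub_comm]; exact le_abs_self _
        _ = Real.sqrt ((s - ℓ) ^ 2) := (Real.sqrt_sq_eq_abs _).symm
        _ ≤ Real.sqrt ((s - ℓ) ^ 2 + t s ^ 2) :=
            Real.sqrt_le_sqrt (by nlinarith [sq_nonneg (t s)])
  have hone : ∀ s : ℝ, (1:ℝ) ≤ Real.sqrt (1 + deriv t s ^ 2) := by
    intro s
    calc (1:ℝ) = Real.sqrt 1 := by simp
      _ ≤ Real.sqrt (1 + deriv t s ^ 2) :=
        Real.sqrt_le_sqrt (by nlinarith [sq_nonneg (deriv t s)])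
  have hle : ∀ s ∈ Icc (0:ℝ) ℓ, G s ≤ F s := by
    intro s hs
    calc G s ≤ min (Real.sqrt (s ^ 2 + t s ^ 2)) (Real.sqrt ((s - ℓ) ^ 2 + t s ^ 2)) :=
          hmin_le s hs
      _ ≤ F s := le_mul_of_one_le_right (le_min (Real.sqrt_nonneg _) (Real.sqrt_nonneg _))
          (hone s)
  -- value of the model integral
  have hG : (∫ s in (0:ℝ)..ℓ, G s) = ℓ ^ 2 / 4 := by
    have hsplit : (∫ s in (0:ℝ)..ℓ, G s)
        = (∫ s in (0:ℝ)..(ℓ/2), G s) + ∫ s in (ℓ/2)..ℓ, G s :=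
      (integral_add_adjacent_intervals
        (hGc.intervalIntegrable _ _) (hGc.intervalIntegrable _ _)).symm
    have h1 : (∫ s in (0:ℝ)..(ℓ/2), G s) = ∫ s in (0:ℝ)..(ℓ/2), s := by
      apply integral_congr
      intro s hs
      rw [uIcc_of_le (by linarith)] at hs
      exact min_eq_left (by rcases hs with ⟨h1, h2⟩; linarith)
    have h2 : (∫ s in (ℓ/2)..ℓ, G s) = ∫ s in (ℓ/2)..ℓ, (ℓ - s) := by
      apply integral_congr
      intro s hs
      rw [uIcc_of_le (by linarith)] at hs
      exact min_eq_right (by rcases hs with ⟨h1, h2⟩; linarith)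
    rw [hsplit, h1, h2, integral_id,
      integral_sub intervalIntegrable_const intervalIntegrable_id, integral_id, integral_const]
    simp only [smul_eq_mul]
    ring
  have hint : (∫ s in (0:ℝ)..ℓ, G s) ≤ ∫ s in (0:ℝ)..ℓ, F s :=
    integral_mono_on hℓ.le (hGc.intervalIntegrable _ _) (hFc.intervalIntegrable _ _) hle
  constructor
  · rw [← hG]; exact hint
  constructor
  · -- equality ⇒ t = 0 on Icc
    intro heq
    by_contra hcon
    push_neg at hcon
    obtain ⟨s₀, hs₀, hts₀⟩ := hcon
    have hs0 : 0 < s₀ := lt_of_le_of_ne hs₀.1 (by rintro rfl; exact hts₀ h0)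
    have hsl : s₀ < ℓ := lt_of_le_of_ne hs₀.2 (by rintro rfl; exact hts₀ hl)
    have hstrict : G s₀ < F s₀ := by
      have hp : 0 < t s₀ ^ 2 := by positivity
      have h1 : s₀ < Real.sqrt (s₀ ^ 2 + t s₀ ^ 2) := by
        calc s₀ = Real.sqrt (s₀ ^ 2) := by
              rw [Real.sqrt_sq_eq_abs, abs_of_pos hs0]
          _ < Real.sqrt (s₀ ^ 2 + t s₀ ^ 2) := by
              apply Real.sqrt_lt_sqrt (sq_nonneg _)
              nlinarith [hp]
      have h2 : ℓ - s₀ < Real.sqrt ((s₀ - ℓ) ^ 2 + t s₀ ^ 2) := by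
        calc ℓ - s₀ = Real.sqrt ((s₀ - ℓ) ^ 2) := by
              rw [Real.sqrt_sq_eq_abs, abs_of_neg (by linarith)]; ring
          _ < Real.sqrt ((s₀ - ℓ) ^ 2 + t s₀ ^ 2) := by
              apply Real.sqrt_lt_sqrt (sq_nonneg _)
              nlinarith [hp]
      calc G s₀ < min (Real.sqrt (s₀ ^ 2 + t s₀ ^ 2))
            (Real.sqrt ((s₀ - ℓ) ^ 2 + t s₀ ^ 2)) := by
            rcases min_cases s₀ (ℓ - s₀) with ⟨h, _⟩ | ⟨h, _⟩ <;> rw [hGdef] <;> simp only [h] <;>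
              exact lt_min (by linarith) (by linarith)
        _ ≤ F s₀ := le_mul_of_one_le_right
            (le_min (Real.sqrt_nonneg _) (Real.sqrt_nonneg _)) (hone s₀)
    have hlt : (∫ s in (0:ℝ)..ℓ, G s) < ∫ s in (0:ℝ)..ℓ, F s :=
      integral_lt_integral_of_continuousOn_of_le_of_exists_lt hℓ hGc.continuousOn
        hFc.continuousOn (fun x hx => hle x (Ioc_subset_Icc_self hx)) ⟨s₀, hs₀, hstrict⟩
    rw [hG, heq] at hlt
    exact lt_irrefl _ hlt
  · -- t = 0 on Icc ⇒ equality
    intro hzero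
    have : (∫ s in (0:ℝ)..ℓ, F s) = ∫ s in (0:ℝ)..ℓ, G s := by
      apply integral_congr
      intro s hs
      rw [uIcc_of_le hℓ.le] at hs
      rcases eq_or_lt_of_le hs.1 with h0' | h0'
      · -- s = 0
        rw [← h0']
        have hm : min (Real.sqrt ((0:ℝ) ^ 2 + t 0 ^ 2))
            (Real.sqrt ((0 - ℓ) ^ 2 + t 0 ^ 2)) = 0 := by
          apply le_antisymm
          · refine (min_le_left _ _).trans_eq ?_
            rw [h0]; norm_num
          · exact le_min (Real.sqrt_nonneg _) (Real.sqrt_nonneg _)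
        show F 0 = G 0
        rw [hF, hGdef]
        dsimp only
        rw [hm, zero_mul, sub_zero, min_eq_left hℓ.le]
      rcases eq_or_lt_of_le hs.2 with hl' | hl'
      · -- s = ℓ
        rw [hl']
        have hm : min (Real.sqrt (ℓ ^ 2 + t ℓ ^ 2))
            (Real.sqrt ((ℓ - ℓ) ^ 2 + t ℓ ^ 2)) = 0 := by
          apply le_antisymm
          · refine (min_le_right _ _).trans_eq ?_
            rw [hl]; norm_num
          · exact le_min (Real.sqrt_nonneg _) (Real.sqrt_nonneg _)
        show F ℓ = G ℓ
        rw [hF, hGdef]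
        dsimp only
        rw [hm, zero_mul, min_eq_right (by linarith : ℓ - ℓ ≤ ℓ), sub_self]
      -- s ∈ Ioo 0 ℓ
      have hts : t s = 0 := hzero s hs
      have hds : deriv t s = 0 := by
        have hev : t =ᶠ[nhds s] (fun _ => (0:ℝ)) := by
          filter_upwards [isOpen_Ioo.mem_nhds (⟨h0', hl'⟩ : s ∈ Ioo 0 ℓ)] with x hx
          exact hzero x (Ioo_subset_Icc_self hx)
        rw [hev.deriv_eq, deriv_const]
      rw [hF, hGdef]
      simp only [hts, hds]
      norm_num [Real.sqrt_one]
      rw [Real.sqrt_sq_eq_abs, Real.sqrt_sq_eq_abs, abs_of_pos h0',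
        abs_of_neg (by linarith : s - ℓ < 0)]
      congr 1
      ring
    rw [this, hG]
end

section
/- Let ℓ > 0 and t : [0, ℓ/2] → R be C¹ with t(0) = 0. Define D(t) = ∫₀^{ℓ/2} |sin θ(s)| · √(1 + t'(s)²) ds, where θ(s) is the angle between the normal (−t'(s), 1)/√(1+t'(s)²) and the radial unit vector (s, t(s))/√(s² + t(s)²) (for (s,t(s)) ≠ 0). Then D(t) ≥ ℓ/2, with equality attained by t ≡ 0. -/
/-!
For the unit normal `n` and the unit radial vector `r` of the curve `s ↦ (s, t s)`, the quantity
`|sin ∠(n, r)| · √(1 + t'²)` is the absolute 2D cross product of `(-t', 1)` with `r`, that is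
`|s + t t'| / ‖(s, t)‖ = |d/ds ‖(s, t s)‖|`. Hence the integral is at least the increase of
`‖(s, t s)‖` over `[0, ℓ/2]`, namely `‖(ℓ/2, t (ℓ/2))‖ - 0 ≥ ℓ/2`. The radius is not differentiable
at the origin, but a one-sided FTC inequality needs only continuity at the endpoints.
-/

open InnerProductGeometry Real Set MeasureTheory intervalIntegral

lemma sin_angle_mul_norm_mul_norm_eq_abs_cross (x y : EuclideanSpace ℝ (Fin 2)) :
    sin (angle x y) * (‖x‖ * ‖y‖) = |x 0 * y 1 - x 1 * y 0| := by
  rw [sin_angle_mul_norm_mul_norm, ← sqrt_sq_eq_abs]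
  congr 1
  simp only [PiLp.inner_apply, Fin.sum_univ_two, RCLike.inner_apply, conj_trivial]
  ring

lemma norm_withLpEquiv_symm_vec_two (a b : ℝ) :
    ‖(WithLp.equiv 2 (Fin 2 → ℝ)).symm ![a, b]‖ = √(a ^ 2 + b ^ 2) := by
  simp [EuclideanSpace.norm_eq, Fin.sum_univ_two]

lemma abs_sin_angle_normal_radial_mul_sqrt (s y d : ℝ) (hsy : 0 < s ^ 2 + y ^ 2) :
    |sin (angle
        ((√(1 + d ^ 2))⁻¹ • (WithLp.equiv 2 (Fin 2 → ℝ)).symm ![-d, 1])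
        ((√(s ^ 2 + y ^ 2))⁻¹ • (WithLp.equiv 2 (Fin 2 → ℝ)).symm ![s, y]))| *
      √(1 + d ^ 2)
    = |s + y * d| / √(s ^ 2 + y ^ 2) := by
  have hn : 0 < √(1 + d ^ 2) := sqrt_pos.2 (by positivity)
  have hr : 0 < √(s ^ 2 + y ^ 2) := sqrt_pos.2 hsy
  rw [angle_smul_left_of_pos _ _ (inv_pos.2 hn), angle_smul_right_of_pos _ _ (inv_pos.2 hr),
    abs_of_nonneg (sin_nonneg_of_nonneg_of_le_pi (angle_nonneg _ _) (angle_le_pi _ _)),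
    eq_div_iff hr.ne', mul_assoc]
  have := sin_angle_mul_norm_mul_norm_eq_abs_cross
    ((WithLp.equiv 2 (Fin 2 → ℝ)).symm ![-d, 1]) ((WithLp.equiv 2 (Fin 2 → ℝ)).symm ![s, y])
  rw [norm_withLpEquiv_symm_vec_two, norm_withLpEquiv_symm_vec_two, one_pow, neg_sq,
    add_comm _ 1] at this
  rw [this]
  simp [abs_sub_comm, add_comm s, mul_comm d]

lemma abs_add_mul_div_sqrt_le_sqrt (s y d : ℝ) :
    |s + y * d| / √(s ^ 2 + y ^ 2) ≤ √(1 + d ^ 2) := by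
  rcases (sqrt_nonneg (s ^ 2 + y ^ 2)).eq_or_lt with hr | hr
  · rw [← hr, div_zero]
    positivity
  rw [div_le_iff₀ hr, ← sqrt_sq_eq_abs, ← sqrt_mul (by positivity)]
  -- Cauchy–Schwarz for `(1, d)` and `(s, y)`
  exact sqrt_le_sqrt (by nlinarith [sq_nonneg (s * d - y)])

lemma HasDerivAt.sqrt_sq_add_sq {t : ℝ → ℝ} {t' x : ℝ} (ht : HasDerivAt t t' x)
    (hx : x ^ 2 + t x ^ 2 ≠ 0) :
    HasDerivAt (fun s ↦ √(s ^ 2 + t s ^ 2)) ((x + t x * t') / √(x ^ 2 + t x ^ 2)) x := by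
  have hsq : HasDerivAt (fun s ↦ s ^ 2 + t s ^ 2) (2 * x + 2 * t x * t') x := by
    refine ((hasDerivAt_pow 2 x).add (ht.fun_pow 2)).congr_deriv ?_
    simp only [Nat.cast_ofNat, Nat.add_one_sub_one, pow_one]
  convert hsq.sqrt hx using 1
  field_simp

/-- `|d/ds ‖(s, t s)‖|`, away from the origin. -/
noncomputable def radialSpeed (t : ℝ → ℝ) (s : ℝ) : ℝ :=
  |s + t s * deriv t s| / √(s ^ 2 + t s ^ 2)

lemma intervalIntegrable_radialSpeed {t : ℝ → ℝ} (ht : ContDiff ℝ 1 t) (a b : ℝ) :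
    IntervalIntegrable (radialSpeed t) volume a b := by
  have hdt : Continuous (deriv t) := ht.continuous_deriv le_rfl
  have htc : Continuous t := ht.continuous
  refine (Continuous.intervalIntegrable (u := fun s ↦ √(1 + deriv t s ^ 2)) (by fun_prop) a
    b).mono_fun ?_ ?_
  · unfold radialSpeed
    exact Measurable.aestronglyMeasurable (by fun_prop)
  · filter_upwards with s
    rw [norm_of_nonneg (by unfold radialSpeed; positivity), norm_of_nonneg (sqrt_nonneg _)]
    exact abs_add_mul_div_sqrt_le_sqrt _ _ _

lemma sqrt_sub_le_integral_radialSpeed {t : ℝ → ℝ} (ht : ContDiff ℝ 1 t) {a b : ℝ}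
    (ha : 0 ≤ a) (hab : a ≤ b) :
    √(b ^ 2 + t b ^ 2) - √(a ^ 2 + t a ^ 2) ≤ ∫ s in a..b, radialSpeed t s := by
  have htd : Differentiable ℝ t := ht.differentiable one_ne_zero
  have htc : Continuous t := ht.continuous
  refine sub_le_integral_of_hasDeriv_right_of_le (g := fun s ↦ √(s ^ 2 + t s ^ 2)) hab
    (by fun_prop) (fun x hx ↦ ?_)
    ((intervalIntegrable_iff_integrableOn_Icc_of_le hab).1 (intervalIntegrable_radialSpeed ht a b))
    (fun x _ ↦ div_le_div_of_nonneg_right (le_abs_self _) (sqrt_nonneg _))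
  have hx0 : x ^ 2 + t x ^ 2 ≠ 0 := by have := ha.trans_lt hx.1; positivity
  exact ((htd x).hasDerivAt.sqrt_sq_add_sq hx0).hasDerivWithinAt

lemma radialSpeed_eq_one {t : ℝ → ℝ} {s : ℝ} (hs : 0 < s) (hts : t s = 0) :
    radialSpeed t s = 1 := by
  simp [radialSpeed, hts, sqrt_sq hs.le, abs_of_pos hs, hs.ne']

theorem stmt_14 (ℓ : ℝ) (hℓ : 0 < ℓ) (t : ℝ → ℝ) (ht : ContDiff ℝ 1 t)
    (h0 : t 0 = 0) :
    (∫ s in (0 : ℝ)..(ℓ / 2),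
        |Real.sin (InnerProductGeometry.angle
            ((Real.sqrt (1 + deriv t s ^ 2))⁻¹ •
              (WithLp.equiv 2 (Fin 2 → ℝ)).symm ![-(deriv t s), 1])
            ((Real.sqrt (s ^ 2 + t s ^ 2))⁻¹ •
              (WithLp.equiv 2 (Fin 2 → ℝ)).symm ![s, t s]))| *
          Real.sqrt (1 + deriv t s ^ 2))
      ≥ ℓ / 2 ∧
    ((∀ s ∈ Set.Icc (0 : ℝ) (ℓ / 2), t s = 0) →
      (∫ s in (0 : ℝ)..(ℓ / 2),
        |Real.sin (InnerProductGeometry.angle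
            ((Real.sqrt (1 + deriv t s ^ 2))⁻¹ •
              (WithLp.equiv 2 (Fin 2 → ℝ)).symm ![-(deriv t s), 1])
            ((Real.sqrt (s ^ 2 + t s ^ 2))⁻¹ •
              (WithLp.equiv 2 (Fin 2 → ℝ)).symm ![s, t s]))| *
          Real.sqrt (1 + deriv t s ^ 2))
      = ℓ / 2) := by
  have hL : 0 ≤ ℓ / 2 := by positivity
  rw [integral_congr_ae (g := radialSpeed t) (.of_forall fun s hs ↦ ?_)]
  · refine ⟨?_, fun hzero ↦ ?_⟩
    · calc ℓ / 2 ≤ √((ℓ / 2) ^ 2 + t (ℓ / 2) ^ 2) - √(0 ^ 2 + t 0 ^ 2) := by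
            simpa [h0] using le_sqrt_of_sq_le (le_add_of_nonneg_right (sq_nonneg (t (ℓ / 2))))
        _ ≤ _ := sqrt_sub_le_integral_radialSpeed ht le_rfl hL
    · rw [integral_congr_ae (g := fun _ ↦ 1) (.of_forall fun s hs ↦ ?_)]
      · simp
      rw [uIoc_of_le hL] at hs
      exact radialSpeed_eq_one hs.1 (hzero s (Ioc_subset_Icc_self hs))
  rw [uIoc_of_le hL] at hs
  exact abs_sin_angle_normal_radial_mul_sqrt _ _ _ (by have := hs.1; positivity)
end
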